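/- arXiv:2201.06325 — 2 statements merged into one kernel-verified Lean document; each statement's English description precedes it below -/
import Mathlib

section
/- Let 𝒫 be a partial order on the events of a trace σ that contains the thread order ≤_TO (i.e., events of the same thread are ordered by 𝒫 according to their order in σ). Define the 𝒫-timestamp of an event e as C_𝒫(e)(u) = max{LocalTime(f) : f ≤_𝒫 e and tid(f) = u} (and 0 if no such f exists), where LocalTime(f) is the number of events f' with f' ≤_TO f. Then for any two events e₁, e₂ of σ: C_𝒫(e₁) ⊑ C_𝒫(e₂) if and only if e₁ ≤_𝒫 e₂. -/
/-- Local time of event `e`: number of events of the same thread occurring no later. -/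
def localTime {E T : Type*} [Fintype E] [LinearOrder E] [DecidableEq T]
    (tid : E → T) (e : E) : ℕ :=
  (Finset.univ.filter (fun e' => tid e' = tid e ∧ e' ≤ e)).card

/-- The 𝒫-timestamp of event `e`: at thread `u`, the maximum local time of an event
`f` of thread `u` with `f ≤_𝒫 e` (and `0` if there is none). -/
def timestamp {E T : Type*} [Fintype E] [LinearOrder E] [DecidableEq T]
    (tid : E → T) (P : E → E → Prop) [DecidableRel P] (e : E) (u : T) : ℕ :=
  (Finset.univ.filter (fun f => P f e ∧ tid f = u)).sup (localTime tid)

theorem timestamp_le_iff {E T : Type*} [Fintype E] [LinearOrder E] [DecidableEq T]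
    (tid : E → T) (P : E → E → Prop) [DecidableRel P]
    (hrefl : ∀ e, P e e)
    (htrans : ∀ e₁ e₂ e₃, P e₁ e₂ → P e₂ e₃ → P e₁ e₃)
    (hantisymm : ∀ e₁ e₂, P e₁ e₂ → P e₂ e₁ → e₁ = e₂)
    (hTO : ∀ e₁ e₂, tid e₁ = tid e₂ → e₁ ≤ e₂ → P e₁ e₂)
    (e₁ e₂ : E) :
    (∀ u, timestamp tid P e₁ u ≤ timestamp tid P e₂ u) ↔ P e₁ e₂ := by
  constructor
  · intro h
    have h1 : localTime tid e₁ ≤ timestamp tid P e₁ (tid e₁) :=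
      Finset.le_sup (by simp [hrefl])
    have h2 : localTime tid e₁ ≤ timestamp tid P e₂ (tid e₁) :=
      h1.trans (h (tid e₁))
    have hpos : 0 < localTime tid e₁ := by
      apply Finset.card_pos.mpr
      exact ⟨e₁, by simp⟩
    -- sup is positive, so the filter set is nonempty; get f attaining the sup
    obtain ⟨f, hf, hfeq⟩ :=
      Finset.exists_mem_eq_sup
        (Finset.univ.filter (fun f => P f e₂ ∧ tid f = tid e₁))
        (by
          by_contra hne
          rw [Finset.not_nonempty_iff_eq_empty] at hne
          have : timestamp tid P e₂ (tid e₁) = 0 := by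
            unfold timestamp; rw [hne]; simp
          omega)
        (localTime tid)
    simp only [Finset.mem_filter] at hf
    obtain ⟨-, hfP, hftid⟩ := hf
    have hle : localTime tid e₁ ≤ localTime tid f := by
      exact h2.trans (le_of_eq hfeq)
    have he₁f : e₁ ≤ f := by
      by_contra hlt
      push_neg at hlt
      have : localTime tid f < localTime tid e₁ := by
        apply Finset.card_lt_card
        constructor
        · intro x hx
          simp only [Finset.mem_filter] at hx ⊢
          exact ⟨Finset.mem_univ _, hx.2.1.trans hftid, hx.2.2.trans hlt.le⟩
        · intro hsub
          have := hsub (by simp : e₁ ∈ Finset.univ.filter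
            (fun e' => tid e' = tid e₁ ∧ e' ≤ e₁))
          simp only [Finset.mem_filter] at this
          exact absurd this.2.2 (not_le.mpr hlt)
      omega
    exact htrans _ _ _ (hTO _ _ hftid.symm he₁f) hfP
  · intro hP u
    apply Finset.sup_mono
    intro x hx
    simp only [Finset.mem_filter] at hx ⊢
    exact ⟨Finset.mem_univ _, htrans _ _ _ hx.2.1 hP, hx.2.2⟩
end

section
/- With the assumptions of the timestamping lemma, events e₁ and e₂ are incomparable under ≤_𝒫 (i.e., neither e₁ ≤_𝒫 e₂ nor e₂ ≤_𝒫 e₁) if and only if their 𝒫-timestamps are incomparable under the pointwise ordering ⊑. -/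
lemma localTime_lt_of_lt {E T : Type*} [Fintype E] [LinearOrder E] [DecidableEq T]
    (tid : E → T) {e f : E} (htid : tid e = tid f) (hlt : f < e) :
    localTime tid f < localTime tid e := by
  apply Finset.card_lt_card
  constructor
  · intro x hx
    simp only [Finset.mem_filter, Finset.mem_univ, true_and] at hx ⊢
    exact ⟨hx.1.trans htid.symm, hx.2.trans hlt.le⟩
  · intro h
    have := h (Finset.mem_filter.mpr ⟨Finset.mem_univ e, rfl, le_refl e⟩)
    simp only [Finset.mem_filter, Finset.mem_univ, true_and] at this
    exact absurd this.2 (not_le.mpr hlt)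

lemma le_of_localTime_le {E T : Type*} [Fintype E] [LinearOrder E] [DecidableEq T]
    (tid : E → T) {e f : E} (htid : tid e = tid f)
    (h : localTime tid e ≤ localTime tid f) : e ≤ f := by
  by_contra hlt
  exact absurd h (not_le.mpr (localTime_lt_of_lt tid htid (not_le.mp hlt)))

lemma timestamp_mono {E T : Type*} [Fintype E] [LinearOrder E] [DecidableEq T]
    (tid : E → T) (P : E → E → Prop) [DecidableRel P]
    (htrans : ∀ e₁ e₂ e₃, P e₁ e₂ → P e₂ e₃ → P e₁ e₃)
    {e₁ e₂ : E} (h : P e₁ e₂) (u : T) :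
    timestamp tid P e₁ u ≤ timestamp tid P e₂ u := by
  apply Finset.sup_mono
  intro x hx
  simp only [Finset.mem_filter, Finset.mem_univ, true_and] at hx ⊢
  exact ⟨htrans _ _ _ hx.1 h, hx.2⟩

lemma P_iff_timestamp_le {E T : Type*} [Fintype E] [LinearOrder E] [DecidableEq T]
    (tid : E → T) (P : E → E → Prop) [DecidableRel P]
    (hrefl : ∀ e, P e e)
    (htrans : ∀ e₁ e₂ e₃, P e₁ e₂ → P e₂ e₃ → P e₁ e₃)
    (hTO : ∀ e₁ e₂, tid e₁ = tid e₂ → e₁ ≤ e₂ → P e₁ e₂)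
    (e₁ e₂ : E) :
    P e₁ e₂ ↔ ∀ u, timestamp tid P e₁ u ≤ timestamp tid P e₂ u := by
  constructor
  · exact fun h u => timestamp_mono tid P htrans h u
  · intro h
    have he₁mem : e₁ ∈ Finset.univ.filter
        (fun f => P f e₁ ∧ tid f = tid e₁) :=
      Finset.mem_filter.mpr ⟨Finset.mem_univ _, hrefl e₁, rfl⟩
    have h1 : localTime tid e₁ ≤ timestamp tid P e₁ (tid e₁) :=
      Finset.le_sup he₁mem
    have h2 : localTime tid e₁ ≤ timestamp tid P e₂ (tid e₁) :=
      h1.trans (h (tid e₁))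
    have hpos : 0 < localTime tid e₁ :=
      Finset.card_pos.mpr ⟨e₁, Finset.mem_filter.mpr ⟨Finset.mem_univ _, rfl, le_refl _⟩⟩
    have hne : (Finset.univ.filter (fun f => P f e₂ ∧ tid f = tid e₁)).Nonempty := by
      by_contra hx
      rw [Finset.not_nonempty_iff_eq_empty] at hx
      simp only [timestamp, hx, Finset.sup_empty, Nat.bot_eq_zero] at h2
      omega
    obtain ⟨f, hf, hfsup⟩ := Finset.exists_mem_eq_sup _ hne (localTime tid)
    simp only [Finset.mem_filter, Finset.mem_univ, true_and] at hf
    have hle : localTime tid e₁ ≤ localTime tid f := by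
      rw [timestamp] at h2; omega
    have : e₁ ≤ f := le_of_localTime_le tid hf.2.symm hle
    exact htrans _ _ _ (hTO _ _ hf.2.symm this) hf.1

theorem timestamp_incomparable {E T : Type*} [Fintype E] [LinearOrder E] [DecidableEq T]
    (tid : E → T) (P : E → E → Prop) [DecidableRel P]
    (hrefl : ∀ e, P e e)
    (htrans : ∀ e₁ e₂ e₃, P e₁ e₂ → P e₂ e₃ → P e₁ e₃)
    (hantisymm : ∀ e₁ e₂, P e₁ e₂ → P e₂ e₁ → e₁ = e₂)
    (hTO : ∀ e₁ e₂, tid e₁ = tid e₂ → e₁ ≤ e₂ → P e₁ e₂)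
    (e₁ e₂ : E) :
    (¬ P e₁ e₂ ∧ ¬ P e₂ e₁) ↔
      (¬ (∀ u, timestamp tid P e₁ u ≤ timestamp tid P e₂ u) ∧
       ¬ (∀ u, timestamp tid P e₂ u ≤ timestamp tid P e₁ u)) := by
  rw [P_iff_timestamp_le tid P hrefl htrans hTO e₁ e₂,
      P_iff_timestamp_le tid P hrefl htrans hTO e₂ e₁]
end
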